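/- Let m ≥ 2 and let X = T(1,s,t) with s, t ≥ 2. The matrix Q_{m−1}(L(X)) = A(L(X)) + (m−1)·D(L(X)) has eigenvalue (m−1)s − 1 with multiplicity s−1, eigenvalue (m−1)t − 1 with multiplicity t−1, and three further eigenvalues λ₁, λ₂, λ₃ satisfying λ₁+λ₂+λ₃ = (2m−1)(s+t) − 2, λ₁λ₂+λ₂λ₃+λ₃λ₁ = m(m−1)s² + m(m−1)t² − (3m−1)s − (3m−1)t + m(3m−2)st + 1, and λ₁λ₂λ₃ = m(1−m)s² + m(1−m)t² + ms + mt − 2m²st + m²(m−1)s²t + m²(m−1)st². -/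

import Mathlib

open scoped Classical

noncomputable section

namespace ArxivPaper

/-- The Kronecker (tensor) product of two simple graphs. -/
def tensorProd {α β : Type*} (G : SimpleGraph α) (H : SimpleGraph β) : SimpleGraph (α × β) where
  Adj p q := G.Adj p.1 q.1 ∧ H.Adj p.2 q.2
  symm := ⟨fun p q h => ⟨G.adj_symm h.1, H.adj_symm h.2⟩⟩
  loopless := ⟨fun p h => G.irrefl h.1⟩

/-- The multiset of eigenvalues of a real matrix (roots of its characteristic polynomial,
with algebraic multiplicity). -/
def spec {n : Type*} [Fintype n] [DecidableEq n] (M : Matrix n n ℝ) : Multiset ℝ :=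
  M.charpoly.roots

/-- Eigenvalues sorted in nondecreasing order. -/
def sortedSpec {n : Type*} [Fintype n] [DecidableEq n] (M : Matrix n n ℝ) : List ℝ :=
  (spec M).sort (· ≤ ·)

/-- The smallest eigenvalue of a real matrix. -/
def minEig {n : Type*} [Fintype n] [DecidableEq n] (M : Matrix n n ℝ) : ℝ :=
  (sortedSpec M).getD 0 0

/-- The Laplacian spectrum of a finite simple graph. -/
def lapSpec {V : Type*} [Fintype V] (G : SimpleGraph V) : Multiset ℝ :=
  spec (G.lapMatrix ℝ)

/-- Algebraic connectivity: the second smallest Laplacian eigenvalue. -/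
def algConn {V : Type*} [Fintype V] (G : SimpleGraph V) : ℝ :=
  (sortedSpec (G.lapMatrix ℝ)).getD 1 0

/-- `Q_{m-1}(G) = A(G) + (m-1)·D(G)` as a real matrix. -/
def qMatrix {V : Type*} [Fintype V] (G : SimpleGraph V) (m : ℕ) : Matrix V V ℝ :=
  G.adjMatrix ℝ + ((m : ℝ) - 1) • G.degMatrix ℝ

/-- `q_min^{m-1}(G)`: the smallest eigenvalue of `Q_{m-1}(G)`. -/
def qMin {V : Type*} [Fintype V] (G : SimpleGraph V) (m : ℕ) : ℝ :=
  minEig (qMatrix G m)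

/-- `β_m(X) = L(X) × K_m`. -/
def betaM {V : Type*} (G : SimpleGraph V) (m : ℕ) : SimpleGraph (G.edgeSet × Fin m) :=
  tensorProd G.lineGraph (⊤ : SimpleGraph (Fin m))

/-- The star graph `K_{1,n-1}` on `n` vertices, with center `0`. -/
def starGraph (n : ℕ) : SimpleGraph (Fin n) :=
  SimpleGraph.fromRel fun u _ => (u : ℕ) = 0

/-- The tree `T(k,s,t)`: a path on `k+1` vertices with `s` pendant vertices attached to the
first vertex and `t` pendant vertices attached to the last vertex. -/
def treeT (k s t : ℕ) : SimpleGraph (Fin (k+1) ⊕ (Fin s ⊕ Fin t)) :=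
  SimpleGraph.fromRel fun u v => match u, v with
    | .inl i, .inl j => (i : ℕ) + 1 = (j : ℕ)
    | .inr (.inl _), .inl i => (i : ℕ) = 0
    | .inr (.inr _), .inl i => (i : ℕ) = k
    | _, _ => False

/-!
The pendant edges at either end of the central edge of `T(1,s,t)`, together with the central
edge, form two cliques `K_{s+1}` and `K_{t+1}` of the line graph sharing one vertex. Two pendant
edges at the same end are adjacent twins of degree `s` (resp. `t`), so the difference of their
indicator vectors is an eigenvector of `Q_{m-1}` for `(m-1)s - 1` (resp. `(m-1)t - 1`). In the
basis made of these `(s-1) + (t-1)` differences and of the indicator vectors of one pendant edge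
at each end and of the central edge, `Q_{m-1}` is block triangular; the second block is a `3 × 3`
matrix whose characteristic polynomial is the cubic. Its roots are real because it divides the
characteristic polynomial of a symmetric matrix, and evaluating the cubic at `0` and `±1` gives
its elementary symmetric functions.
-/

open Polynomial Matrix

section MatrixCharpoly

variable {ι κ n R : Type*} [Fintype ι] [Fintype κ] [Fintype n] [DecidableEq ι] [DecidableEq κ]
  [DecidableEq n] [CommRing R]

theorem _root_.Matrix.charpoly_eq_of_mul_eq_mul {P Q T : Matrix n n R} (hP : IsUnit P.det)
    (h : Q * P = P * T) : Q.charpoly = T.charpoly := by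
  rw [← mul_nonsing_inv_cancel_right P Q hP, h, Matrix.mul_assoc, charpoly_mul_comm,
    Matrix.mul_assoc, nonsing_inv_mul _ hP, Matrix.mul_one]

theorem _root_.Matrix.charpoly_fromBlocks_of_mul_eq {A : Matrix ι ι R} {B : Matrix ι κ R}
    {C : Matrix κ ι R} {D : Matrix κ κ R} (K : Matrix κ ι R) {Λ : Matrix ι ι R}
    (h₁ : A + B * K = Λ) (h₂ : C + D * K = K * Λ) :
    (fromBlocks A B C D).charpoly = Λ.charpoly * (D - K * B).charpoly := by
  have hP : IsUnit (fromBlocks 1 0 K 1 : Matrix (ι ⊕ κ) (ι ⊕ κ) R).det := by simp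
  have h : fromBlocks A B C D * fromBlocks 1 0 K 1 =
      fromBlocks 1 0 K 1 * fromBlocks Λ B 0 (D - K * B) := by
    simp [fromBlocks_multiply, h₁, h₂]
  rw [charpoly_eq_of_mul_eq_mul hP h, charpoly_fromBlocks_zero₂₁]

end MatrixCharpoly

theorem _root_.Polynomial.Splits.exists_eq_of_natDegree_eq_three {K : Type*} [Field K]
    {p : K[X]} (hp : p.Splits) (hm : p.Monic) (h3 : p.natDegree = 3) :
    ∃ a b c, p = (X - C a) * (X - C b) * (X - C c) := by
  obtain ⟨a, b, c, habc⟩ := Multiset.card_eq_three.mp ((splits_iff_card_roots.mp hp).trans h3)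
  refine ⟨a, b, c, ?_⟩
  rw [hp.eq_prod_roots_of_monic hm, habc]
  simp [mul_assoc]

section QMatrix

variable {V : Type*} [Fintype V]

theorem qMatrix_apply (G : SimpleGraph V) (m : ℕ) (x y : V) :
    qMatrix G m x y =
      if x = y then ((m : ℝ) - 1) * G.degree x else if G.Adj x y then 1 else 0 := by
  by_cases h : x = y
  · subst h
    simp [qMatrix, SimpleGraph.degMatrix]
  · simp [qMatrix, SimpleGraph.degMatrix, h]

theorem isHermitian_qMatrix (G : SimpleGraph V) (m : ℕ) : (qMatrix G m).IsHermitian :=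
  (G.isHermitian_adjMatrix ℝ).add
    ((G.isHermitian_degMatrix ℝ).smul (IsSelfAdjoint.all _))

theorem charpoly_qMatrix_eq_of_iso {W : Type*} [Fintype W] [DecidableEq V] [DecidableEq W]
    {G : SimpleGraph V} {H : SimpleGraph W} (f : G ≃g H) (m : ℕ) :
    (qMatrix G m).charpoly = (qMatrix H m).charpoly := by
  rw [← charpoly_reindex f.toEquiv]
  congr 1
  ext v w
  obtain ⟨v, rfl⟩ := f.toEquiv.surjective v
  obtain ⟨w, rfl⟩ := f.toEquiv.surjective w
  simp only [reindex_apply, submatrix_apply, Equiv.symm_apply_apply]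
  simp [qMatrix, SimpleGraph.degMatrix, diagonal_apply]
  exact if_congr f.map_adj_iff.symm rfl rfl

end QMatrix

/-- Edges of `T(1,s,t)`: `inl (inl i)` and `inl (inr j)` are the pendant edges to leaves `i + 1`
and `j + 1` at the two ends of the central edge, `inr 0` and `inr 1` those to leaves `0`, and
`inr 2` is the central edge. -/
abbrev EdgeIdx (s t : ℕ) := (Fin (s - 1) ⊕ Fin (t - 1)) ⊕ Fin 3

def block {s t : ℕ} : EdgeIdx s t → Fin 3
  | .inl (.inl _) => 0
  | .inl (.inr _) => 1
  | .inr k => k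

def gluedCliques (s t : ℕ) : SimpleGraph (EdgeIdx s t) where
  Adj x y := x ≠ y ∧ (block x = block y ∨ block x = 2 ∨ block y = 2)
  symm := ⟨fun _ _ h => ⟨h.1.symm, by tauto⟩⟩
  loopless := ⟨fun _ h => h.1 rfl⟩

section TreeEdges

variable {s t : ℕ} [NeZero s] [NeZero t]

def treeEdge : EdgeIdx s t → Sym2 (Fin (1 + 1) ⊕ (Fin s ⊕ Fin t))
  | .inl (.inl i) => s(.inl 0, .inr (.inl ⟨i + 1, by omega⟩))
  | .inl (.inr j) => s(.inl 1, .inr (.inr ⟨j + 1, by omega⟩))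
  | .inr 0 => s(.inl 0, .inr (.inl 0))
  | .inr 1 => s(.inl 1, .inr (.inr 0))
  | .inr 2 => s(.inl 0, .inl 1)

theorem treeEdge_mem_edgeSet (x : EdgeIdx s t) : treeEdge x ∈ (treeT 1 s t).edgeSet := by
  rcases x with (i | j) | k
  all_goals try fin_cases k
  all_goals simp [treeEdge, treeT]

theorem treeEdge_injective : Function.Injective (treeEdge : EdgeIdx s t → _) := by
  intro x y h
  rcases x with (i | j) | k <;> rcases y with (i' | j') | k'
  all_goals try fin_cases k
  all_goals try fin_cases k'
  all_goals simp_all [treeEdge, Fin.ext_iff]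

theorem exists_treeEdge_eq_leftLeaf (i : Fin s) :
    ∃ x : EdgeIdx s t, treeEdge x = s(.inl 0, .inr (.inl i)) := by
  by_cases hi : (i : ℕ) = 0
  · exact ⟨.inr 0, by simp [treeEdge, Fin.ext_iff, hi]⟩
  · exact ⟨.inl (.inl ⟨i - 1, by omega⟩), by simp [treeEdge, Fin.ext_iff]; omega⟩

theorem exists_treeEdge_eq_rightLeaf (j : Fin t) :
    ∃ x : EdgeIdx s t, treeEdge x = s(.inl 1, .inr (.inr j)) := by
  by_cases hj : (j : ℕ) = 0
  · exact ⟨.inr 1, by simp [treeEdge, Fin.ext_iff, hj]⟩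
  · exact ⟨.inl (.inr ⟨j - 1, by omega⟩), by simp [treeEdge, Fin.ext_iff]; omega⟩

theorem exists_treeEdge_eq {e : Sym2 (Fin (1 + 1) ⊕ (Fin s ⊕ Fin t))}
    (he : e ∈ (treeT 1 s t).edgeSet) : ∃ x, treeEdge x = e := by
  induction e using Sym2.ind with | _ u v =>
  rcases u with a | i | j <;> rcases v with b | i' | j' <;> simp [treeT] at he
  · fin_cases a <;> fin_cases b <;> simp at he
    exacts [⟨.inr 2, rfl⟩, ⟨.inr 2, Sym2.eq_swap⟩]
  · subst he
    exact exists_treeEdge_eq_leftLeaf i'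
  · obtain rfl : a = 1 := Fin.ext he
    exact exists_treeEdge_eq_rightLeaf j'
  · subst he
    obtain ⟨x, hx⟩ := exists_treeEdge_eq_leftLeaf (t := t) i
    exact ⟨x, hx.trans Sym2.eq_swap⟩
  · obtain rfl : b = 1 := Fin.ext he
    obtain ⟨x, hx⟩ := exists_treeEdge_eq_rightLeaf (s := s) j
    exact ⟨x, hx.trans Sym2.eq_swap⟩

theorem lineGraph_adj_treeEdge (x y : EdgeIdx s t) :
    (treeT 1 s t).lineGraph.Adj ⟨treeEdge x, treeEdge_mem_edgeSet x⟩
      ⟨treeEdge y, treeEdge_mem_edgeSet y⟩ ↔ (gluedCliques s t).Adj x y := by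
  rw [SimpleGraph.lineGraph_adj_iff_exists, Ne, Subtype.mk.injEq, treeEdge_injective.eq_iff]
  refine and_congr_right fun hxy => ?_
  rcases x with (i | j) | k <;> rcases y with (i' | j') | k'
  all_goals try fin_cases k
  all_goals try fin_cases k'
  all_goals simp_all [treeEdge, block, Fin.ext_iff]

def gluedCliquesIsoLineGraph : gluedCliques s t ≃g (treeT 1 s t).lineGraph where
  toEquiv := Equiv.ofBijective (fun x => ⟨treeEdge x, treeEdge_mem_edgeSet x⟩)
    ⟨fun _ _ h => treeEdge_injective (congrArg Subtype.val h),
      fun ⟨_, he⟩ => (exists_treeEdge_eq he).imp fun _ hx => Subtype.ext hx⟩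
  map_rel_iff' := lineGraph_adj_treeEdge _ _

end TreeEdges

/-- In the basis given by the columns of `fromBlocks 1 0 (twinDiff s t) 1`, the first
`(s - 1) + (t - 1)` vectors are the differences `e x - e (inr (block x))` of adjacent twins. -/
def twinDiff (s t : ℕ) : Matrix (Fin 3) (Fin (s - 1) ⊕ Fin (t - 1)) ℝ :=
  fun k x => if block (.inl x : EdgeIdx s t) = k then -1 else 0

def twinEigenvalue (m s t : ℕ) : Fin (s - 1) ⊕ Fin (t - 1) → ℝ :=
  Sum.elim (fun _ => ((m : ℝ) - 1) * s - 1) (fun _ => ((m : ℝ) - 1) * t - 1)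

def quotientMatrix (m s t : ℕ) : Matrix (Fin 3) (Fin 3) ℝ :=
  !![m * s - 1, 0, s; 0, m * t - 1, t; 1, 1, (m - 1) * (s + t)]

theorem eval_charpoly_quotientMatrix (m s t : ℕ) (x : ℝ) :
    (quotientMatrix m s t).charpoly.eval x =
      (x - (m * s - 1)) * (x - (m * t - 1)) * (x - (m - 1) * (s + t))
        - t * (x - (m * s - 1)) - s * (x - (m * t - 1)) := by
  rw [eval_charpoly, det_fin_three]
  simp [quotientMatrix]
  ring

section GluedCliques

variable {s t : ℕ} [NeZero s] [NeZero t] (m : ℕ)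

theorem gluedCliques_degree (x : EdgeIdx s t) :
    (gluedCliques s t).degree x = ![s, t, s + t] (block x) := by
  have hs := NeZero.pos s
  have ht := NeZero.pos t
  rw [← SimpleGraph.card_neighborFinset_eq_degree, SimpleGraph.neighborFinset_eq_filter,
    Finset.card_filter]
  rcases x with (⟨i, hi⟩ | ⟨j, hj⟩) | k
  all_goals try fin_cases k
  all_goals simp only [Fintype.sum_sum_type, Fin.sum_univ_three]
  all_goals simp [gluedCliques, block, Finset.sum_ite, Finset.filter_ne]
  all_goals omega

theorem qMatrix_gluedCliques_apply (x y : EdgeIdx s t) :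
    qMatrix (gluedCliques s t) m x y =
      if x = y then ((m : ℝ) - 1) * (![s, t, s + t] (block x) : ℕ)
      else if block x = block y ∨ block x = 2 ∨ block y = 2 then 1 else 0 := by
  rw [qMatrix_apply, gluedCliques_degree]
  by_cases h : x = y <;> simp [h, gluedCliques]

theorem toBlocks₁₁_add_toBlocks₁₂_mul_twinDiff :
    (qMatrix (gluedCliques s t) m).toBlocks₁₁ +
        (qMatrix (gluedCliques s t) m).toBlocks₁₂ * twinDiff s t =
      diagonal (twinEigenvalue m s t) := by
  ext (i | j) (i' | j')
  all_goals simp [toBlocks₁₁, toBlocks₁₂, qMatrix_gluedCliques_apply, block, twinEigenvalue,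
    twinDiff, mul_apply, Fin.sum_univ_three, diagonal_apply]
  all_goals try split_ifs
  all_goals ring

theorem toBlocks₂₁_add_toBlocks₂₂_mul_twinDiff :
    (qMatrix (gluedCliques s t) m).toBlocks₂₁ +
        (qMatrix (gluedCliques s t) m).toBlocks₂₂ * twinDiff s t =
      twinDiff s t * diagonal (twinEigenvalue m s t) := by
  ext k (i | j)
  all_goals fin_cases k
  all_goals simp [toBlocks₂₁, toBlocks₂₂, qMatrix_gluedCliques_apply, block, twinEigenvalue,
    twinDiff, mul_apply, Fin.sum_univ_three, diagonal_apply]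
  all_goals ring

theorem toBlocks₂₂_sub_twinDiff_mul_toBlocks₁₂ :
    (qMatrix (gluedCliques s t) m).toBlocks₂₂ -
        twinDiff s t * (qMatrix (gluedCliques s t) m).toBlocks₁₂ =
      quotientMatrix m s t := by
  ext k k'
  fin_cases k <;> fin_cases k'
  all_goals simp [toBlocks₁₂, toBlocks₂₂, qMatrix_gluedCliques_apply, block, twinDiff, mul_apply,
    Fintype.sum_sum_type, quotientMatrix, Nat.cast_pred (NeZero.pos s),
    Nat.cast_pred (NeZero.pos t)]
  all_goals ring

theorem charpoly_qMatrix_gluedCliques :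
    (qMatrix (gluedCliques s t) m).charpoly =
      (X - C (((m : ℝ) - 1) * s - 1)) ^ (s - 1) *
        (X - C (((m : ℝ) - 1) * t - 1)) ^ (t - 1) * (quotientMatrix m s t).charpoly := by
  rw [← fromBlocks_toBlocks (qMatrix (gluedCliques s t) m),
    charpoly_fromBlocks_of_mul_eq (twinDiff s t) (toBlocks₁₁_add_toBlocks₁₂_mul_twinDiff m)
      (toBlocks₂₁_add_toBlocks₂₂_mul_twinDiff m), toBlocks₂₂_sub_twinDiff_mul_toBlocks₁₂,
    charpoly_diagonal, Fintype.prod_sum_type]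
  simp [twinEigenvalue]

theorem charpoly_qMatrix_lineGraph_treeT :
    (qMatrix (treeT 1 s t).lineGraph m).charpoly =
      (X - C (((m : ℝ) - 1) * s - 1)) ^ (s - 1) *
        (X - C (((m : ℝ) - 1) * t - 1)) ^ (t - 1) * (quotientMatrix m s t).charpoly := by
  rw [← charpoly_qMatrix_eq_of_iso gluedCliquesIsoLineGraph m, charpoly_qMatrix_gluedCliques]

end GluedCliques

theorem spec_qMatrix_lineGraph_T1st_general (m s t : ℕ) (hs : 2 ≤ s) (ht : 2 ≤ t) :
    ∃ l1 l2 l3 : ℝ,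
      spec (qMatrix (treeT 1 s t).lineGraph m) =
        (Multiset.replicate (s-1) (((m:ℝ)-1)*(s:ℝ) - 1) +
         Multiset.replicate (t-1) (((m:ℝ)-1)*(t:ℝ) - 1) + {l1, l2, l3}) ∧
      l1 + l2 + l3 = (2*(m:ℝ)-1)*((s:ℝ)+(t:ℝ)) - 2 ∧
      l1*l2 + l2*l3 + l3*l1 =
        (m:ℝ)*((m:ℝ)-1)*(s:ℝ)^2 + (m:ℝ)*((m:ℝ)-1)*(t:ℝ)^2
          - (3*(m:ℝ)-1)*(s:ℝ) - (3*(m:ℝ)-1)*(t:ℝ) + (m:ℝ)*(3*(m:ℝ)-2)*(s:ℝ)*(t:ℝ) + 1 ∧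
      l1*l2*l3 =
        (m:ℝ)*(1-(m:ℝ))*(s:ℝ)^2 + (m:ℝ)*(1-(m:ℝ))*(t:ℝ)^2 + (m:ℝ)*(s:ℝ) + (m:ℝ)*(t:ℝ)
          - 2*(m:ℝ)^2*(s:ℝ)*(t:ℝ) + (m:ℝ)^2*((m:ℝ)-1)*(s:ℝ)^2*(t:ℝ)
          + (m:ℝ)^2*((m:ℝ)-1)*(s:ℝ)*(t:ℝ)^2 := by
  have : NeZero s := ⟨by omega⟩
  have : NeZero t := ⟨by omega⟩
  have hQ := charpoly_qMatrix_lineGraph_treeT (s := s) (t := t) m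
  have hsplit : (quotientMatrix m s t).charpoly.Splits :=
    (isHermitian_qMatrix (treeT 1 s t).lineGraph m).splits_charpoly.of_dvd
      (charpoly_monic _).ne_zero (Dvd.intro_left _ hQ.symm)
  obtain ⟨l₁, l₂, l₃, hl⟩ :=
    hsplit.exists_eq_of_natDegree_eq_three (charpoly_monic _) (by simp)
  have hcubic (x : ℝ) := (congrArg (eval x) hl).symm.trans (eval_charpoly_quotientMatrix m s t x)
  simp only [eval_mul, eval_sub, eval_X, eval_C] at hcubic
  refine ⟨l₁, l₂, l₃, ?_, ?_, ?_, ?_⟩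
  · rw [spec, hQ, hl, ← roots_multiset_prod_X_sub_C (_ + _ + _)]
    congr 1
    simp only [Multiset.map_add, Multiset.prod_add, Multiset.map_replicate,
      Multiset.prod_replicate, Multiset.insert_eq_cons, Multiset.map_cons, Multiset.prod_cons,
      Multiset.map_singleton, Multiset.prod_singleton]
    ring
  · linear_combination (-(1 / 2 : ℝ)) * hcubic 1 - (1 / 2 : ℝ) * hcubic (-1) + hcubic 0
  · linear_combination (1 / 2 : ℝ) * hcubic 1 - (1 / 2 : ℝ) * hcubic (-1)
  · linear_combination -hcubic 0

/-- the spectrum of `Q_{m-1}(L(T(1,s,t)))` for `s,t ≥ 2`. -/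
theorem spec_qMatrix_lineGraph_T1st (m s t : ℕ) (hm : 2 ≤ m) (hs : 2 ≤ s) (ht : 2 ≤ t) :
    ∃ l1 l2 l3 : ℝ,
      spec (qMatrix (treeT 1 s t).lineGraph m) =
        (Multiset.replicate (s-1) (((m:ℝ)-1)*(s:ℝ) - 1) +
         Multiset.replicate (t-1) (((m:ℝ)-1)*(t:ℝ) - 1) + {l1, l2, l3}) ∧
      l1 + l2 + l3 = (2*(m:ℝ)-1)*((s:ℝ)+(t:ℝ)) - 2 ∧
      l1*l2 + l2*l3 + l3*l1 =
        (m:ℝ)*((m:ℝ)-1)*(s:ℝ)^2 + (m:ℝ)*((m:ℝ)-1)*(t:ℝ)^2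
          - (3*(m:ℝ)-1)*(s:ℝ) - (3*(m:ℝ)-1)*(t:ℝ) + (m:ℝ)*(3*(m:ℝ)-2)*(s:ℝ)*(t:ℝ) + 1 ∧
      l1*l2*l3 =
        (m:ℝ)*(1-(m:ℝ))*(s:ℝ)^2 + (m:ℝ)*(1-(m:ℝ))*(t:ℝ)^2 + (m:ℝ)*(s:ℝ) + (m:ℝ)*(t:ℝ)
          - 2*(m:ℝ)^2*(s:ℝ)*(t:ℝ) + (m:ℝ)^2*((m:ℝ)-1)*(s:ℝ)^2*(t:ℝ)
          + (m:ℝ)^2*((m:ℝ)-1)*(s:ℝ)*(t:ℝ)^2 :=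
  spec_qMatrix_lineGraph_T1st_general m s t hs ht

end ArxivPaper
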